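/- Let F be a field of characteristic zero, let A be an integral domain that is a finitely generated F-algebra, with fraction field K, and let B denote the integral closure of A in K. Then every F-linear derivation D : A → A extends uniquely to an F-linear derivation D' : B → B; that is, there exists a unique F-linear derivation D' of B such that D'(a) = D(a) for every a ∈ A (where A is viewed as a subring of B). -/

import Mathlib

set_option linter.unusedSectionVars false
set_option linter.unusedVariables false
set_option maxHeartbeats 1000000
open Finset PowerSeries
open scoped nonZeroDivisors



set_option linter.unusedSectionVars false

section FractionDerivation

variable {F A K : Type*} [Field F] [CommRing A] [IsDomain A] [Algebra F A]
  [Field K] [Algebra A K] [IsFractionRing A K] [Algebra F K] [IsScalarTower F A K]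
  (D : Derivation F A A)

/-- The extension of a derivation to the fraction field, as a raw function. -/
noncomputable def dK (x : K) : K :=
  (algebraMap A K (D (IsLocalization.sec (nonZeroDivisors A) x).1)
    - x * algebraMap A K (D (IsLocalization.sec (nonZeroDivisors A) x).2)) /
    algebraMap A K (IsLocalization.sec (nonZeroDivisors A) x).2

variable (K)

lemma alg_ne_zero {s : A} (hs : s ≠ 0) : algebraMap A K s ≠ 0 := fun h =>
  hs (IsFractionRing.injective A K (by rw [h, map_zero]))

variable {K}

lemma dK_spec {x : K} {a s : A} (hs : s ≠ 0)
    (h : x * algebraMap A K s = algebraMap A K a) :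
    dK D x * algebraMap A K s = algebraMap A K (D a) - x * algebraMap A K (D s) := by
  obtain ⟨⟨p1, p2⟩, hp⟩ : ∃ p : A × (nonZeroDivisors A),
      x * algebraMap A K p.2 = algebraMap A K p.1 ∧
        IsLocalization.sec (nonZeroDivisors A) x = p :=
    ⟨IsLocalization.sec (nonZeroDivisors A) x, IsLocalization.sec_spec _ x, rfl⟩
  have hp2 : (p2 : A) ≠ 0 := nonZeroDivisors.ne_zero p2.2
  have h2 : x * algebraMap A K (p2 : A) = algebraMap A K p1 := hp.1
  have hcross : a * (p2 : A) = p1 * s := by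
    apply IsFractionRing.injective A K
    rw [map_mul, map_mul, ← h, ← h2]; ring
  have h3 : algebraMap A K (D (a * (p2 : A))) = algebraMap A K (D (p1 * s)) := by
    rw [hcross]
  rw [Derivation.leibniz, Derivation.leibniz] at h3
  simp only [smul_eq_mul, map_add, map_mul] at h3
  have hd : dK D x = (algebraMap A K (D p1) - x * algebraMap A K (D (p2 : A))) /
      algebraMap A K (p2 : A) := by
    rw [dK, hp.2]
  rw [hd, div_mul_eq_mul_div, div_eq_iff (alg_ne_zero K hp2)]
  linear_combination -h3 - algebraMap A K (D (p2 : A)) * h + algebraMap A K (D s) * h2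

lemma dK_eq_of_mul {x : K} {a s : A} (hs : s ≠ 0)
    (h : x * algebraMap A K s = algebraMap A K a) (y : K)
    (hy : y * algebraMap A K s = algebraMap A K (D a) - x * algebraMap A K (D s)) :
    dK D x = y :=
  mul_right_cancel₀ (alg_ne_zero K hs) ((dK_spec D hs h).trans hy.symm)

lemma exists_rep (x : K) : ∃ (a s : A), s ≠ 0 ∧ x * algebraMap A K s = algebraMap A K a := by
  obtain ⟨⟨a, s⟩, h⟩ := IsLocalization.surj (nonZeroDivisors A) x
  exact ⟨a, s, nonZeroDivisors.ne_zero s.2, h⟩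

lemma dK_add (x y : K) : dK D (x + y) = dK D x + dK D y := by
  obtain ⟨a, s, hs, hx⟩ := exists_rep (A := A) x
  obtain ⟨b, t, ht, hy⟩ := exists_rep (A := A) y
  have hst : (s * t : A) ≠ 0 := mul_ne_zero hs ht
  have h1 := dK_spec D hs hx
  have h2 := dK_spec D ht hy
  refine dK_eq_of_mul D (a := a * t + b * s) hst ?_ (dK D x + dK D y) ?_
  · simp only [map_add, map_mul]
    linear_combination algebraMap A K t * hx + algebraMap A K s * hy
  · simp only [map_add, map_mul, Derivation.leibniz, smul_eq_mul]
    linear_combination algebraMap A K t * h1 + algebraMap A K s * h2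
      + algebraMap A K (D t) * hx + algebraMap A K (D s) * hy

lemma dK_smul (f : F) (x : K) : dK D (f • x) = f • dK D x := by
  obtain ⟨a, s, hs, hx⟩ := exists_rep (A := A) x
  have h1 := dK_spec D hs hx
  refine dK_eq_of_mul D (a := f • a) hs ?_ (f • dK D x) ?_
  · rw [Algebra.smul_def, Algebra.smul_def, map_mul, ← IsScalarTower.algebraMap_apply F A K]
    linear_combination algebraMap F K f * hx
  · rw [Derivation.map_smul, Algebra.smul_def (A := A), map_mul,
      ← IsScalarTower.algebraMap_apply F A K]
    rw [Algebra.smul_def f (dK D x), Algebra.smul_def f x]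
    linear_combination algebraMap F K f * h1

lemma dK_mul (x y : K) : dK D (x * y) = x * dK D y + y * dK D x := by
  obtain ⟨a, s, hs, hx⟩ := exists_rep (A := A) x
  obtain ⟨b, t, ht, hy⟩ := exists_rep (A := A) y
  have hst : (s * t : A) ≠ 0 := mul_ne_zero hs ht
  have h1 := dK_spec D hs hx
  have h2 := dK_spec D ht hy
  refine dK_eq_of_mul D (a := a * b) hst ?_ _ ?_
  · simp only [map_mul]
    linear_combination algebraMap A K b * hx + x * algebraMap A K s * hy
  · simp only [map_add, map_mul, Derivation.leibniz, smul_eq_mul]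
    linear_combination x * algebraMap A K s * h2 + y * algebraMap A K t * h1
      + algebraMap A K (D b) * hx + algebraMap A K (D a) * hy

lemma dK_one : dK (K := K) D 1 = 0 := by
  refine dK_eq_of_mul D (a := 1) one_ne_zero ?_ 0 ?_ <;>
    simp

lemma dK_algebraMap (a : A) : dK D (algebraMap A K a) = algebraMap A K (D a) := by
  refine dK_eq_of_mul D (a := a) one_ne_zero ?_ _ ?_ <;> simp

/-- The extension of `D` to the fraction field as a bundled derivation. -/
noncomputable def DK : Derivation F K K where
  toFun := dK D
  map_add' := dK_add D
  map_smul' := dK_smul D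
  map_one_eq_zero' := dK_one D
  leibniz' a b := by simp only [LinearMap.coe_mk, AddHom.coe_mk, dK_mul D a b, smul_eq_mul]

@[simp] lemma DK_apply (x : K) : DK D x = dK D x := rfl

end FractionDerivation




section IterLeibniz

variable {R S : Type*} [CommRing R] [CommRing S] [Algebra R S] (d : Derivation R S S)

theorem Derivation.iterate_leibniz (p q : S) (n : ℕ) :
    (⇑d)^[n] (p * q) =
      ∑ k ∈ range n.succ, (n.choose k • ((⇑d)^[n - k] p * (⇑d)^[k] q)) := by
  induction n with
  | zero =>
    simp [Finset.range]
  | succ n IH =>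
    have dmul : ∀ a b : S, d (a * b) = d a * b + a * d b := fun a b => by
      rw [Derivation.leibniz, smul_eq_mul, smul_eq_mul]; ring
    calc
      (⇑d)^[n + 1] (p * q) =
          d (∑ k ∈ range n.succ,
              n.choose k • ((⇑d)^[n - k] p * (⇑d)^[k] q)) := by
        rw [Function.iterate_succ_apply', IH]
      _ = (∑ k ∈ range n.succ,
            n.choose k • ((⇑d)^[n - k + 1] p * (⇑d)^[k] q)) +
          ∑ k ∈ range n.succ,
            n.choose k • ((⇑d)^[n - k] p * (⇑d)^[k + 1] q) := by
        simp_rw [map_sum, map_nsmul, dmul, Function.iterate_succ_apply',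
          smul_add, sum_add_distrib]
      _ = (∑ k ∈ range n.succ,
                n.choose k.succ • ((⇑d)^[n - k] p * (⇑d)^[k + 1] q)) +
              1 • ((⇑d)^[n + 1] p * (⇑d)^[0] q) +
            ∑ k ∈ range n.succ, n.choose k • ((⇑d)^[n - k] p * (⇑d)^[k + 1] q) :=
        ?_
      _ = ((∑ k ∈ range n.succ, n.choose k • ((⇑d)^[n - k] p * (⇑d)^[k + 1] q)) +
              ∑ k ∈ range n.succ,
                n.choose k.succ • ((⇑d)^[n - k] p * (⇑d)^[k + 1] q)) +
            1 • ((⇑d)^[n + 1] p * (⇑d)^[0] q) := by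
        rw [add_comm, add_assoc]
      _ = (∑ i ∈ range n.succ,
              (n + 1).choose (i + 1) • ((⇑d)^[n + 1 - (i + 1)] p * (⇑d)^[i + 1] q)) +
            1 • ((⇑d)^[n + 1] p * (⇑d)^[0] q) := by
        simp_rw [Nat.choose_succ_succ, Nat.succ_sub_succ, add_smul, sum_add_distrib]
      _ = ∑ k ∈ range n.succ.succ,
            n.succ.choose k • ((⇑d)^[n.succ - k] p * (⇑d)^[k] q) := by
        rw [sum_range_succ' _ n.succ, Nat.choose_zero_right, tsub_zero]
    congr
    refine (sum_range_succ' _ _).trans (congr_arg₂ (· + ·) ?_ ?_)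
    · rw [sum_range_succ, Nat.choose_succ_self, zero_smul, add_zero]
      refine sum_congr rfl fun k hk => ?_
      rw [mem_range] at hk
      congr
      omega
    · rw [Nat.choose_zero_right, tsub_zero]

end IterLeibniz



section Almost

variable {A K : Type*} [CommRing A] [IsDomain A]
  [Field K] [Algebra A K] [IsFractionRing A K]

lemma alg_ne_zero' {s : A} (hs : s ≠ 0) : algebraMap A K s ≠ 0 := fun h =>
  hs (IsFractionRing.injective A K (by rw [h, map_zero]))

/-- common denominator for a finitely generated submodule of the fraction field -/
lemma exists_common_denom (N : Submodule A K) (hN : N.FG) :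
    ∃ c : A, c ≠ 0 ∧ ∀ x ∈ N, ∃ a : A, algebraMap A K a = algebraMap A K c * x := by
  obtain ⟨T, hT⟩ := hN
  obtain ⟨b, hb⟩ := IsLocalization.exist_integer_multiples (nonZeroDivisors A) T id
  refine ⟨b, nonZeroDivisors.ne_zero b.2, fun x hx => ?_⟩
  rw [← hT] at hx
  induction hx using Submodule.span_induction with
  | mem y hy =>
      obtain ⟨a, ha⟩ := hb y hy
      exact ⟨a, by rw [ha]; simp [Algebra.smul_def]⟩
  | zero => exact ⟨0, by simp⟩
  | add y z _ _ hy hz =>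
      obtain ⟨ay, hay⟩ := hy; obtain ⟨az, haz⟩ := hz
      exact ⟨ay + az, by rw [map_add, hay, haz]; ring⟩
  | smul a y _ hy =>
      obtain ⟨ay, hay⟩ := hy
      exact ⟨a * ay, by rw [map_mul, hay, Algebra.smul_def]; ring⟩

lemma isIntegral_of_almost [IsNoetherianRing A] {x : K} {c : A} (hc : c ≠ 0)
    (h : ∀ n : ℕ, ∃ a : A, algebraMap A K a = algebraMap A K c * x ^ n) :
    IsIntegral A x := by
  set S := Algebra.adjoin A {x} with hS
  have hSspan : Subalgebra.toSubmodule S = Submodule.span A (Submonoid.closure {x} : Set K) :=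
    Algebra.adjoin_eq_span A {x}
  set φ : K →ₗ[A] K := LinearMap.mulLeft A (algebraMap A K c) with hφ
  have hφinj : Function.Injective φ := fun u v huv => by
    simpa [hφ, LinearMap.mulLeft_apply] using
      mul_left_cancel₀ (alg_ne_zero' hc) huv
  have hmaple : (Subalgebra.toSubmodule S).map φ ≤ LinearMap.range (Algebra.linearMap A K) := by
    rw [hSspan, Submodule.map_span, Submodule.span_le]
    rintro _ ⟨y, hy, rfl⟩
    obtain ⟨n, rfl⟩ := Submonoid.mem_closure_singleton.mp hy
    obtain ⟨a, ha⟩ := h n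
    exact ⟨a, by simpa [hφ] using ha⟩
  have hfgmap : ((Subalgebra.toSubmodule S).map φ).FG := by
    have := IsNoetherian.noetherian
      (Submodule.comap (Algebra.linearMap A K) ((Subalgebra.toSubmodule S).map φ))
    have heq := Submodule.map_comap_eq_self hmaple
    rw [← heq]
    exact this.map _
  have hfg : (Subalgebra.toSubmodule S).FG :=
    Submodule.fg_of_fg_map_injective φ hφinj hfgmap
  exact IsIntegral.of_mem_of_fg S hfg x (Algebra.self_mem_adjoin_singleton A x)

end Almost


section Exp

variable {F A K : Type*} [Field F] [CharZero F] [CommRing A] [IsDomain A] [Algebra F A]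
  [Field K] [Algebra A K] [IsFractionRing A K] [Algebra F K] [IsScalarTower F A K]
  (d : Derivation F K K)

/-- exponential-type generating series of iterates of a derivation -/
noncomputable def Efun (x : K) : PowerSeries K :=
  PowerSeries.mk fun n => (n.factorial : K)⁻¹ * (⇑d)^[n] x

lemma Efun_coeff (n : ℕ) (x : K) :
    PowerSeries.coeff (R := K) n (Efun d x) = (n.factorial : K)⁻¹ * (⇑d)^[n] x :=
  coeff_mk _ _

lemma Efun_coeff_zero (x : K) : PowerSeries.coeff (R := K) 0 (Efun d x) = x := by
  simp [Efun_coeff]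

lemma Efun_coeff_one (x : K) : PowerSeries.coeff (R := K) 1 (Efun d x) = d x := by
  simp [Efun_coeff]

lemma Efun_mul (x y : K) : Efun d (x * y) = Efun d x * Efun d y := by
  have : CharZero K := charZero_of_injective_algebraMap (algebraMap F K).injective
  ext n
  rw [PowerSeries.coeff_mul]
  simp only [Efun_coeff]
  rw [Finset.Nat.sum_antidiagonal_eq_sum_range_succ
    (fun i j => ((i.factorial : K)⁻¹ * (⇑d)^[i] x) * ((j.factorial : K)⁻¹ * (⇑d)^[j] y))]
  rw [Derivation.iterate_leibniz d x y n,
    ← Finset.sum_range_reflect (fun k => n.choose k • ((⇑d)^[n - k] x * (⇑d)^[k] y)) (n + 1),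
    Finset.mul_sum]
  refine Finset.sum_congr rfl fun k hk => ?_
  rw [Finset.mem_range, Nat.lt_succ_iff] at hk
  simp only [Nat.add_sub_cancel]
  rw [Nat.sub_sub_self hk, Nat.choose_symm hk]
  have hfact := Nat.choose_mul_factorial_mul_factorial hk
  have h1 : (n.factorial : K) ≠ 0 := Nat.cast_ne_zero.mpr (Nat.factorial_ne_zero n)
  have h2 : (k.factorial : K) ≠ 0 := Nat.cast_ne_zero.mpr (Nat.factorial_ne_zero k)
  have h3 : ((n - k).factorial : K) ≠ 0 := Nat.cast_ne_zero.mpr (Nat.factorial_ne_zero (n - k))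
  have hfactK : ((n.choose k : K)) * (k.factorial : K) * ((n - k).factorial : K)
      = (n.factorial : K) := by
    exact_mod_cast congrArg (Nat.cast (R := K)) hfact
  rw [nsmul_eq_mul]
  field_simp
  ring_nf
  ring_nf at hfactK
  linear_combination ((⇑d)^[k] x * (⇑d)^[n - k] y) * hfactK

lemma Efun_one : Efun d 1 = 1 := by
  ext n
  cases n with
  | zero => simp [Efun_coeff]
  | succ m =>
      rw [Efun_coeff, PowerSeries.coeff_one]
      simp only [Nat.succ_ne_zero, if_false]
      have : (⇑d)^[m + 1] (1 : K) = 0 := by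
        rw [Function.iterate_succ_apply]
        rw [d.map_one_eq_zero]
        induction m with
        | zero => simp
        | succ l ih => rw [Function.iterate_succ_apply, map_zero]; exact ih
      rw [this, mul_zero]

lemma Efun_pow (x : K) (i : ℕ) : Efun d (x ^ i) = (Efun d x) ^ i := by
  induction i with
  | zero => simpa using Efun_one d
  | succ l ih => rw [pow_succ, pow_succ, Efun_mul, ih]

end Exp


section LowCoeff

variable {K : Type*} [CommRing K]

lemma coeff_mul_low (f g : PowerSeries K) (m k : ℕ)
    (hf : ∀ i < m, PowerSeries.coeff (R := K) i f = 0) (hg : ∀ j < k, PowerSeries.coeff (R := K) j g = 0) :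
    (∀ l < m + k, PowerSeries.coeff (R := K) l (f * g) = 0) ∧
      PowerSeries.coeff (R := K) (m + k) (f * g) = PowerSeries.coeff (R := K) m f * PowerSeries.coeff (R := K) k g := by
  constructor
  · intro l hl
    rw [PowerSeries.coeff_mul]
    apply Finset.sum_eq_zero
    rintro ⟨i, j⟩ hij
    rw [Finset.HasAntidiagonal.mem_antidiagonal] at hij
    rcases lt_or_ge i m with h | h
    · rw [hf i h, zero_mul]
    · have : j < k := by omega
      rw [hg j this, mul_zero]
  · rw [PowerSeries.coeff_mul]
    rw [Finset.sum_eq_single (m, k)]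
    · rintro ⟨i, j⟩ hij hne
      rw [Finset.HasAntidiagonal.mem_antidiagonal] at hij
      rcases lt_or_ge i m with h | h
      · rw [hf i h, zero_mul]
      · by_cases hj : j < k
        · rw [hg j hj, mul_zero]
        · exfalso
          apply hne
          have hik : i = m ∧ j = k := by omega
          rw [hik.1, hik.2]
    · intro h
      exact absurd (by simp : (m, k) ∈ Finset.HasAntidiagonal.antidiagonal (m + k)) h

lemma coeff_pow_low (z : PowerSeries K) (m : ℕ)
    (hz : ∀ i < m, PowerSeries.coeff (R := K) i z = 0) (n : ℕ) :
    (∀ l < n * m, PowerSeries.coeff (R := K) l (z ^ n) = 0) ∧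
      PowerSeries.coeff (R := K) (n * m) (z ^ n) = (PowerSeries.coeff (R := K) m z) ^ n := by
  induction n with
  | zero => exact ⟨fun l hl => absurd hl (by omega), by simp⟩
  | succ n ih =>
      have h := coeff_mul_low (z ^ n) z (n * m) m ih.1 hz
      constructor
      · intro l hl
        rw [pow_succ]
        have e : (n + 1) * m = n * m + m := by ring
        rw [e] at hl
        exact h.1 l hl
      · rw [pow_succ, (by ring : (n + 1) * m = n * m + m), h.2, ih.2, pow_succ]

end LowCoeff

section CoeffMem

variable {A K : Type*} [CommRing A] [CommRing K] [Algebra A K] (P : Subalgebra A K)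

lemma coeffs_mem_mul {f g : PowerSeries K} (hf : ∀ k, PowerSeries.coeff (R := K) k f ∈ P)
    (hg : ∀ k, PowerSeries.coeff (R := K) k g ∈ P) (k : ℕ) :
    PowerSeries.coeff (R := K) k (f * g) ∈ P := by
  rw [PowerSeries.coeff_mul]
  exact sum_mem fun c _ => mul_mem (hf c.1) (hg c.2)

lemma coeffs_mem_pow {f : PowerSeries K} (hf : ∀ k, PowerSeries.coeff (R := K) k f ∈ P) (n : ℕ)
    (k : ℕ) : PowerSeries.coeff (R := K) k (f ^ n) ∈ P := by
  induction n generalizing k with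
  | zero =>
      rw [pow_zero, PowerSeries.coeff_one]
      split <;> simp [Subalgebra.one_mem, Subalgebra.zero_mem]
  | succ n ih =>
      rw [pow_succ]
      exact coeffs_mem_mul P ih hf k

end CoeffMem
section MainIntegral

variable {F A K : Type*} [Field F] [CharZero F] [CommRing A] [IsDomain A] [Algebra F A]
  [Field K] [Algebra A K] [IsFractionRing A K] [Algebra F K] [IsScalarTower F A K]
  [IsNoetherianRing A]
  (D : Derivation F A A)

lemma DK_iterate_algebraMap (k : ℕ) (a : A) :
    (⇑(DK D (K := K)))^[k] (algebraMap A K a) = algebraMap A K ((⇑D)^[k] a) := by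
  induction k generalizing a with
  | zero => simp
  | succ n ih =>
      rw [Function.iterate_succ_apply, Function.iterate_succ_apply]
      rw [DK_apply, dK_algebraMap, ih]

lemma Efun_coeff_algebraMap_mem (P : Subalgebra A K) (a : A) (k : ℕ) :
    PowerSeries.coeff (R := K) k (Efun (DK D) (algebraMap A K a)) ∈ P := by
  rw [Efun_coeff, DK_iterate_algebraMap]
  have h1 : ((k.factorial : K))⁻¹ = algebraMap A K (algebraMap F A ((k.factorial : F))⁻¹) := by
    rw [← IsScalarTower.algebraMap_apply F A K, map_inv₀, map_natCast]
  rw [h1, ← map_mul]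
  exact P.algebraMap_mem _

theorem Efun_coeff_isIntegral {b : K} (hb : IsIntegral A b) :
    ∀ m : ℕ, IsIntegral A (PowerSeries.coeff (R := K) m (Efun (DK D) b)) := by
  obtain ⟨c, hc, hpow⟩ : ∃ c : A, c ≠ 0 ∧
      ∀ n : ℕ, ∃ a : A, algebraMap A K a = algebraMap A K c * b ^ n := by
    obtain ⟨c, hc, h⟩ := exists_common_denom (Subalgebra.toSubmodule (Algebra.adjoin A {b}))
      hb.fg_adjoin_singleton
    exact ⟨c, hc, fun n => h _ (pow_mem (Algebra.self_mem_adjoin_singleton A b) n)⟩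
  intro m
  induction m using Nat.strong_induction_on with
  | _ m IH =>
  set y : ℕ → K := fun i => PowerSeries.coeff (R := K) i (Efun (DK D) b) with hy
  set P : Subalgebra A K := Algebra.adjoin A (Set.range fun i : Fin m => y i) with hP
  have hPfg : (Subalgebra.toSubmodule P).FG :=
    fg_adjoin_of_finite (Set.finite_range _) (by rintro x ⟨i, rfl⟩; exact IH i i.2)
  have hygen : ∀ i < m, y i ∈ P := fun i hi =>
    Algebra.subset_adjoin ⟨⟨i, hi⟩, rfl⟩
  set p : PowerSeries K := ∑ i ∈ Finset.range m, (PowerSeries.monomial (R := K) i) (y i) with hp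
  have hpco : ∀ k, PowerSeries.coeff (R := K) k p =
      if k < m then y k else 0 := by
    intro k
    rw [hp, map_sum]
    simp only [PowerSeries.coeff_monomial]
    rw [Finset.sum_ite_eq (Finset.range m) k y]
    simp [Finset.mem_range]
  have hpc : ∀ k, PowerSeries.coeff (R := K) k p ∈ P := by
    intro k
    rw [hpco]
    split
    · exact hygen k (by assumption)
    · exact P.zero_mem
  set z : PowerSeries K := Efun (DK D) b - p with hz
  have hzlow : ∀ i < m, PowerSeries.coeff (R := K) i z = 0 := by
    intro i hi
    rw [hz, map_sub, hpco, if_pos hi, hy, sub_self]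
  have hzm : PowerSeries.coeff (R := K) m z = y m := by
    rw [hz, map_sub, hpco, if_neg (lt_irrefl m), sub_zero]
  have hkey : ∀ n k : ℕ,
      PowerSeries.coeff (R := K) k (Efun (DK D) (algebraMap A K c) * z ^ n) ∈ P := by
    intro n k
    have hzdecomp : Efun (DK D) (algebraMap A K c) * z ^ n =
        ∑ i ∈ Finset.range (n + 1),
          Efun (DK D) (algebraMap A K c * b ^ i) * (-p) ^ (n - i) * (n.choose i : ℕ) • 1 := by
      rw [hz, sub_eq_add_neg, add_pow, Finset.mul_sum]
      refine Finset.sum_congr rfl fun i hi => ?_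
      rw [Efun_mul, Efun_pow, nsmul_eq_mul]
      ring
    rw [hzdecomp, map_sum]
    refine sum_mem fun i hi => ?_
    obtain ⟨a, ha⟩ := hpow i
    rw [← ha]
    have h1 : ∀ j, PowerSeries.coeff (R := K) j (Efun (DK D) (algebraMap A K a)) ∈ P :=
      Efun_coeff_algebraMap_mem D P a
    have h2 : ∀ j, PowerSeries.coeff (R := K) j ((-p) ^ (n - i)) ∈ P :=
      coeffs_mem_pow P (fun j => by rw [map_neg]; exact neg_mem (hpc j)) (n - i)
    have h3 : ∀ j, PowerSeries.coeff (R := K) j ((n.choose i : ℕ) • (1 : PowerSeries K)) ∈ P := by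
      intro j
      rw [map_nsmul]
      exact nsmul_mem (by
        rw [PowerSeries.coeff_one]; split
        · exact P.one_mem
        · exact P.zero_mem) _
    exact coeffs_mem_mul P (coeffs_mem_mul P h1 h2) h3 k
  have hc1 : ∀ n : ℕ, algebraMap A K c * (y m) ^ n ∈ P := by
    intro n
    have h1 := coeff_pow_low z m hzlow n
    have h0 : ∀ i < 0, PowerSeries.coeff (R := K) i (Efun (DK D) (algebraMap A K c)) = 0 :=
      fun i hi => absurd hi (Nat.not_lt_zero i)
    have h2 := (coeff_mul_low (Efun (DK D) (algebraMap A K c)) (z ^ n) 0 (n * m) h0 h1.1).2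
    rw [zero_add, h1.2, hzm, Efun_coeff_zero] at h2
    have := hkey n (n * m)
    rwa [h2] at this
  obtain ⟨e, he, hPdenom⟩ := exists_common_denom _ hPfg
  apply isIntegral_of_almost (mul_ne_zero he hc)
  intro n
  obtain ⟨a, ha⟩ := hPdenom _ (hc1 n)
  refine ⟨a, ?_⟩
  rw [ha, map_mul]
  ring

theorem dK_isIntegral {b : K} (hb : IsIntegral A b) : IsIntegral A (dK D b) := by
  have := Efun_coeff_isIntegral D hb 1
  rwa [Efun_coeff_one, DK_apply] at this

end MainIntegral
section Final

variable (F A K : Type*) [Field F] [CharZero F]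
    [CommRing A] [IsDomain A] [Algebra F A] [Algebra.FiniteType F A]
    [Field K] [Algebra A K] [IsFractionRing A K]
    [Algebra F K] [IsScalarTower F A K]

theorem seidenberg_derivation_extends_to_normalization'
    (D : Derivation F A A) :
    ∃! D' : Derivation F (integralClosure A K) (integralClosure A K),
      ∀ a : A,
        D' (algebraMap A (integralClosure A K) a) =
          algebraMap A (integralClosure A K) (D a) := by
  haveI : IsNoetherianRing A := Algebra.FiniteType.isNoetherianRing F A
  set B := integralClosure A K with hB
  have hmem : ∀ x : K, x ∈ B ↔ IsIntegral A x := fun x => Iff.rfl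
  have hcoe_inj : Function.Injective (fun b : B => (b : K)) := Subtype.coe_injective
  -- the candidate derivation
  let D' : Derivation F B B :=
    { toFun := fun b => ⟨dK D (b : K), (hmem _).mpr (dK_isIntegral D ((hmem _).mp b.2))⟩
      map_add' := fun x y => by
        apply Subtype.ext
        simp only [Subalgebra.coe_add]
        exact dK_add D (x : K) (y : K)
      map_smul' := fun f x => by
        apply Subtype.ext
        simp only [RingHom.id_apply, SetLike.val_smul]
        exact dK_smul D f (x : K)
      map_one_eq_zero' := by
        apply Subtype.ext
        simp only [LinearMap.coe_mk, AddHom.coe_mk, OneMemClass.coe_one, ZeroMemClass.coe_zero]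
        exact dK_one D
      leibniz' := fun x y => by
        apply Subtype.ext
        simp only [LinearMap.coe_mk, AddHom.coe_mk, MulMemClass.coe_mul, Subalgebra.coe_add,
          smul_eq_mul]
        exact dK_mul D (x : K) (y : K) }
  have hD'coe : ∀ b : B, (D' b : K) = dK D (b : K) := fun b => rfl
  have halg : ∀ a : A, ((algebraMap A B a : B) : K) = algebraMap A K a := fun a => rfl
  refine ⟨D', ?_, ?_⟩
  · intro a
    apply Subtype.ext
    rw [hD'coe, halg, halg, dK_algebraMap]
  · intro E hE
    apply Derivation.ext
    intro b
    apply Subtype.ext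
    obtain ⟨a, s, hs, hrep⟩ := exists_rep (A := A) (b : K)
    have hrepB : b * algebraMap A B s = algebraMap A B a := by
      apply Subtype.ext
      simp only [MulMemClass.coe_mul, halg]
      exact hrep
    have hkey : ∀ (E' : Derivation F B B),
        (∀ a : A, E' (algebraMap A B a) = algebraMap A B (D a)) →
        ((E' b : K)) * algebraMap A K s
          = algebraMap A K (D a) - (b : K) * algebraMap A K (D s) := by
      intro E' hE'
      have h1 := congrArg E' hrepB
      rw [Derivation.leibniz, hE' a, hE' s] at h1
      have h2 := congrArg (fun z : B => (z : K)) h1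
      simp only [Subalgebra.coe_add, SetLike.val_smul, smul_eq_mul, MulMemClass.coe_mul,
        halg] at h2
      linear_combination h2
    have hE2 := hkey E hE
    have hD2 := hkey D' (fun a => by
      apply Subtype.ext
      rw [hD'coe, halg, halg, dK_algebraMap])
    have := hE2.trans hD2.symm
    exact mul_right_cancel₀ (alg_ne_zero K hs) this

end Final

/-- **Seidenberg's theorem** (key step in Lemma 4.4 of the paper):
Let `F` be a field of characteristic zero, `A` an integral domain of finite type
over `F`, `K` its fraction field, and `B = integralClosure A K` the normalization
of `A`.  Then every `F`-linear derivation `D : A → A` extends uniquely to an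
`F`-linear derivation of `B`. -/
theorem seidenberg_derivation_extends_to_normalization
    (F A K : Type*) [Field F] [CharZero F]
    [CommRing A] [IsDomain A] [Algebra F A] [Algebra.FiniteType F A]
    [Field K] [Algebra A K] [IsFractionRing A K]
    [Algebra F K] [IsScalarTower F A K]
    (D : Derivation F A A) :
    ∃! D' : Derivation F (integralClosure A K) (integralClosure A K),
      ∀ a : A,
        D' (algebraMap A (integralClosure A K) a) =
          algebraMap A (integralClosure A K) (D a) := by
  exact seidenberg_derivation_extends_to_normalization' F A K D
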